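/- Let K be a probabilistic theory, let M, N be observables on K, let T be a trivial observable on K, and let 0 ≤ μ ≤ λ ≤ 1. If M is compatible with λN + (1−λ)T, then M is compatible with μN + (1−μ)T. -/

import Mathlib

open MeasureTheory

variable {V : Type*} [NormedAddCommGroup V] [NormedSpace ℝ V] [CompleteSpace V]

/-- A probabilistic theory: a σ-convex subset `K` of a real Banach space `V`.
Whenever `λᵢ ∈ [0,1]` with `∑ λᵢ = 1` and `vᵢ ∈ K`, the series `∑ λᵢ vᵢ`
converges in norm to an element of `K`. -/
def SigmaConvex (K : Set V) : Prop :=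
  ∀ (lam : ℕ → ℝ) (v : ℕ → V), (∀ i, 0 ≤ lam i) → (∀ i, v i ∈ K) →
    HasSum lam 1 → ∃ s ∈ K, HasSum (fun i => lam i • v i) s

/-- An (`α`-valued) observable on `K`: a σ-affine map from `K` to the Borel
probability measures on `α`.  Taking `α = ℝ` gives ordinary (1-dimensional)
observables, and `α = Fin n → ℝ` gives `n`-dimensional observables. -/
structure Observable (K : Set V) (α : Type*) [MeasurableSpace α] where
  toFun : K → Measure α
  prob : ∀ s, IsProbabilityMeasure (toFun s)
  sigmaAffine : ∀ (lam : ℕ → ℝ) (v : ℕ → K) (s : K), (∀ i, 0 ≤ lam i) →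
    HasSum lam 1 → HasSum (fun i => lam i • (v i : V)) (s : V) →
    ∀ A : Set α, MeasurableSet A →
      toFun s A = ∑' i, ENNReal.ofReal (lam i) * toFun (v i) A

/-- Observables `M₁, …, Mₙ` on `K` are compatible if they have a joint
observable: an `n`-dimensional observable whose `i`-th marginal is `Mᵢ`
(where the `i`-th marginal of `J` is `s ↦ (A ↦ J s {x | x i ∈ A})`,
i.e. evaluation on the cylinder set `ℝ × ⋯ × A × ⋯ × ℝ`). -/
def Compatible {K : Set V} {n : ℕ} (Ms : Fin n → Observable K ℝ) : Prop :=
  ∃ J : Observable K (Fin n → ℝ), ∀ (s : K) (A : Set ℝ), MeasurableSet A →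
    ∀ i, J.toFun s {x | x i ∈ A} = (Ms i).toFun s A

/-- A trivial observable: one that is constantly equal to a fixed Borel
probability measure `p` on `ℝ`. -/
def IsTrivial {K : Set V} (T : Observable K ℝ) : Prop :=
  ∃ p : Measure ℝ, ∀ s, T.toFun s = p

/-!
With `c = μ / λ`, the observable `μN + (1-μ)T` is the mixture `c P + (1-c) T` of
`P = λN + (1-λ)T` with `T`. The observables compatible with `M` form a convex set, since
mixing joint observables mixes their marginals, and `M` is compatible with every trivial
observable `T`, a joint observable being `s ↦ M(s) ⊗ T(s)`.
-/

theorem ENNReal.ofReal_add_ofReal_one_sub {c : ℝ} (hc0 : 0 ≤ c) (hc1 : c ≤ 1) :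
    ENNReal.ofReal c + ENNReal.ofReal (1 - c) = 1 := by
  rw [← ENNReal.ofReal_add hc0 (sub_nonneg.2 hc1), add_sub_cancel, ENNReal.ofReal_one]

theorem ENNReal.ofReal_mix_mix {c lam : ℝ} (hc0 : 0 ≤ c) (hc1 : c ≤ 1)
    (hlam1 : lam ≤ 1) (x y : ENNReal) :
    ENNReal.ofReal c * (ENNReal.ofReal lam * x + ENNReal.ofReal (1 - lam) * y)
      + ENNReal.ofReal (1 - c) * y
      = ENNReal.ofReal (c * lam) * x + ENNReal.ofReal (1 - c * lam) * y := by
  rw [mul_add, ← mul_assoc, ← mul_assoc, ← ENNReal.ofReal_mul hc0, ← ENNReal.ofReal_mul hc0,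
    add_assoc, ← add_mul, ← ENNReal.ofReal_add (by nlinarith) (by linarith)]
  congr 3
  ring

namespace Observable

variable {K : Set V} {α β : Type*} [MeasurableSpace α] [MeasurableSpace β]

theorem toFun_eq_sum (M : Observable K α) {lam : ℕ → ℝ} {v : ℕ → K} {s : K}
    (hlam : ∀ i, 0 ≤ lam i) (hsum : HasSum lam 1)
    (hv : HasSum (fun i => lam i • (v i : V)) (s : V)) :
    M.toFun s = Measure.sum fun i => ENNReal.ofReal (lam i) • M.toFun (v i) := by
  ext A hA
  simpa [Measure.sum_apply _ hA] using M.sigmaAffine lam v s hlam hsum hv A hA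

noncomputable def mix (c : ℝ) (hc0 : 0 ≤ c) (hc1 : c ≤ 1) (M N : Observable K α) :
    Observable K α where
  toFun s := ENNReal.ofReal c • M.toFun s + ENNReal.ofReal (1 - c) • N.toFun s
  prob s := by
    have := M.prob s
    have := N.prob s
    constructor
    simp only [Measure.add_apply, Measure.smul_apply, measure_univ, smul_eq_mul, mul_one]
    exact ENNReal.ofReal_add_ofReal_one_sub hc0 hc1
  sigmaAffine lam v s hlam hsum hv A hA := by
    simp only [Measure.add_apply, Measure.smul_apply, smul_eq_mul]
    rw [M.sigmaAffine lam v s hlam hsum hv A hA, N.sigmaAffine lam v s hlam hsum hv A hA,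
      ← ENNReal.tsum_mul_left, ← ENNReal.tsum_mul_left, ← ENNReal.tsum_add]
    congr 1 with i
    ring

theorem mix_apply {c : ℝ} {hc0 : 0 ≤ c} {hc1 : c ≤ 1} {M N : Observable K α} (s : K)
    (A : Set α) :
    (mix c hc0 hc1 M N).toFun s A =
      ENNReal.ofReal c * M.toFun s A + ENNReal.ofReal (1 - c) * N.toFun s A :=
  rfl

noncomputable def map (M : Observable K α) {f : α → β} (hf : Measurable f) :
    Observable K β where
  toFun s := (M.toFun s).map f
  prob s := by
    have := M.prob s
    exact Measure.isProbabilityMeasure_map hf.aemeasurable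
  sigmaAffine lam v s hlam hsum hv A hA := by
    simp only [Measure.map_apply hf hA]
    exact M.sigmaAffine lam v s hlam hsum hv _ (hf hA)

theorem map_apply (M : Observable K α) {f : α → β} (hf : Measurable f) (s : K) {A : Set β}
    (hA : MeasurableSet A) : (M.map hf).toFun s A = M.toFun s (f ⁻¹' A) :=
  Measure.map_apply hf hA

noncomputable def prodConst (M : Observable K α) (T : Observable K β)
    (hT : ∀ s t, T.toFun s = T.toFun t) : Observable K (α × β) where
  toFun s := (M.toFun s).prod (T.toFun s)
  prob s := by
    have := M.prob s
    have := T.prob s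
    infer_instance
  sigmaAffine lam v s hlam hsum hv A hA := by
    have := T.prob s
    simp only [hT _ s]
    rw [M.toFun_eq_sum hlam hsum hv, Measure.prod_sum_left, Measure.sum_apply _ hA]
    simp only [Measure.prod_smul_left, Measure.smul_apply, smul_eq_mul]

end Observable

section Compatible

variable {K : Set V}

theorem Compatible.congr {n : ℕ} {Ms Ns : Fin n → Observable K ℝ} (h : Compatible Ms)
    (hMN : ∀ i s A, MeasurableSet A → (Ms i).toFun s A = (Ns i).toFun s A) :
    Compatible Ns := by
  obtain ⟨J, hJ⟩ := h
  exact ⟨J, fun s A hA i => (hJ s A hA i).trans (hMN i s A hA)⟩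

theorem Compatible.mix {n : ℕ} {Ms Ns : Fin n → Observable K ℝ} (hM : Compatible Ms)
    (hN : Compatible Ns) (c : ℝ) (hc0 : 0 ≤ c) (hc1 : c ≤ 1) :
    Compatible fun i => (Ms i).mix c hc0 hc1 (Ns i) := by
  obtain ⟨J, hJ⟩ := hM
  obtain ⟨J', hJ'⟩ := hN
  exact ⟨J.mix c hc0 hc1 J', fun s A hA i => by
    simp only [Observable.mix_apply, hJ s A hA i, hJ' s A hA i]⟩

theorem compatible_pair_of_joint {M N : Observable K ℝ} (J : Observable K (ℝ × ℝ))
    (hM : ∀ s A, MeasurableSet A → J.toFun s (Prod.fst ⁻¹' A) = M.toFun s A)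
    (hN : ∀ s A, MeasurableSet A → J.toFun s (Prod.snd ⁻¹' A) = N.toFun s A) :
    Compatible ![M, N] := by
  refine ⟨J.map MeasurableEquiv.finTwoArrow.symm.measurable, fun s A hA i =>
    (Observable.map_apply _ _ _ (measurable_pi_apply i hA)).trans ?_⟩
  fin_cases i
  · exact hM s A hA
  · exact hN s A hA

theorem compatible_of_isTrivial (M T : Observable K ℝ) (hT : IsTrivial T) :
    Compatible ![M, T] := by
  obtain ⟨p, hp⟩ := hT
  refine compatible_pair_of_joint (M.prodConst T fun s t => (hp s).trans (hp t).symm)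
    (fun s A _ => ?_) (fun s A _ => ?_)
  all_goals
    have := M.prob s
    have := T.prob s
  · rw [← Set.prod_univ, Observable.prodConst, Measure.prod_prod, measure_univ, mul_one]
  · rw [← Set.univ_prod, Observable.prodConst, Measure.prod_prod, measure_univ, one_mul]

end Compatible

theorem compatible_with_noisier_version_general {K : Set V}
    (M N T : Observable K ℝ) (hT : IsTrivial T)
    (lam mu : ℝ) (h0 : 0 ≤ mu) (hml : mu ≤ lam) (h1 : lam ≤ 1)
    (P : Observable K ℝ)
    (hP : ∀ (s : K) (A : Set ℝ), MeasurableSet A →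
      P.toFun s A = ENNReal.ofReal lam * N.toFun s A
        + ENNReal.ofReal (1 - lam) * T.toFun s A)
    (hMP : Compatible ![M, P])
    (Q : Observable K ℝ)
    (hQ : ∀ (s : K) (A : Set ℝ), MeasurableSet A →
      Q.toFun s A = ENNReal.ofReal mu * N.toFun s A
        + ENNReal.ofReal (1 - mu) * T.toFun s A) :
    Compatible ![M, Q] := by
  have hlam0 : 0 ≤ lam := h0.trans hml
  -- `μ / λ` is the junk value `0` when `λ = 0`, and then `μ = 0` as well.
  have hcmu : mu / lam * lam = mu := by
    rcases hlam0.eq_or_lt with hlam | hlam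
    · subst hlam; simp [le_antisymm hml h0]
    · exact div_mul_cancel₀ mu hlam.ne'
  have hc0 : 0 ≤ mu / lam := div_nonneg h0 hlam0
  have hc1 : mu / lam ≤ 1 := div_le_one_of_le₀ hml hlam0
  refine (hMP.mix (compatible_of_isTrivial M T hT) _ hc0 hc1).congr ?_
  simp only [Fin.forall_fin_two, Matrix.cons_val_zero, Matrix.cons_val_one, Observable.mix_apply]
  refine ⟨fun s A _ => ?_, fun s A hA => ?_⟩
  · rw [← add_mul, ENNReal.ofReal_add_ofReal_one_sub hc0 hc1, one_mul]
  · rw [hP s A hA, hQ s A hA, ENNReal.ofReal_mix_mix hc0 hc1 h1, hcmu]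

/-- If `M` is compatible with `λN + (1-λ)T` for a trivial
observable `T`, then `M` is compatible with the noisier version `μN + (1-μ)T`
whenever `0 ≤ μ ≤ λ ≤ 1`. -/
theorem compatible_with_noisier_version {K : Set V} (hK : SigmaConvex K)
    (M N T : Observable K ℝ) (hT : IsTrivial T)
    (lam mu : ℝ) (h0 : 0 ≤ mu) (hml : mu ≤ lam) (h1 : lam ≤ 1)
    (P : Observable K ℝ)
    (hP : ∀ (s : K) (A : Set ℝ), MeasurableSet A →
      P.toFun s A = ENNReal.ofReal lam * N.toFun s A
        + ENNReal.ofReal (1 - lam) * T.toFun s A)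
    (hMP : Compatible ![M, P])
    (Q : Observable K ℝ)
    (hQ : ∀ (s : K) (A : Set ℝ), MeasurableSet A →
      Q.toFun s A = ENNReal.ofReal mu * N.toFun s A
        + ENNReal.ofReal (1 - mu) * T.toFun s A) :
    Compatible ![M, Q] :=
  compatible_with_noisier_version_general M N T hT lam mu h0 hml h1 P hP hMP Q hQ
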